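/- arXiv:1212.0721 — 9 statements merged into one kernel-verified Lean document; each statement's English description precedes it below -/
import Mathlib

section
/- For two distinct complex numbers x = p·e^{is} and y = q·e^{it} with p, q > 0 and s ≠ t (mod 2π), one has (|x−y|/|x/|x| − y/|y||)² − ((|x|+|y|)/2)² = (1/4)(p−q)²·cot²((t−s)/2), which is nonnegative. -/
/-!
Write `c = cos (t - s)`. The law of cosines gives `‖x - y‖² = p² + q² - 2pqc`, and, for the unit
vectors `x/‖x‖ = e^{is}`, `y/‖y‖ = e^{it}`, `‖e^{is} - e^{it}‖² = 2 - 2c`, which is nonzero since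
`e^{is} ≠ e^{it}`. With the half-angle formula `cot²((t - s)/2) = (1 + c)/(1 - c)` the identity
becomes a rational identity in `p, q, c`.
-/

open Complex

-- Also true when `sin (θ / 2) = 0`: both sides are then `0` by the convention `x / 0 = 0`.
lemma Real.cot_half_sq (θ : ℝ) :
    Real.cot (θ / 2) ^ 2 = (1 + Real.cos θ) / (1 - Real.cos θ) := by
  have hcos : Real.cos (θ / 2) ^ 2 = (1 + Real.cos θ) / 2 := by
    rw [Real.cos_sq, mul_div_cancel₀ θ two_ne_zero]; ring
  have hsin : Real.sin (θ / 2) ^ 2 = (1 - Real.cos θ) / 2 := by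
    rw [Real.sin_sq, hcos]; ring
  rw [Real.cot_eq_cos_div_sin, div_pow, hcos, hsin, div_div_div_cancel_right₀ two_ne_zero]

lemma Complex.norm_ofReal_mul_exp_mul_I {r : ℝ} (hr : 0 ≤ r) (θ : ℝ) :
    ‖(r : ℂ) * exp (θ * I)‖ = r := by
  rw [norm_mul, norm_exp_ofReal_mul_I, mul_one, Complex.norm_of_nonneg hr]

lemma Complex.ofReal_mul_exp_mul_I_div_norm {r : ℝ} (hr : 0 < r) (θ : ℝ) :
    (r : ℂ) * exp (θ * I) / (‖(r : ℂ) * exp (θ * I)‖ : ℂ) = exp (θ * I) := by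
  rw [norm_ofReal_mul_exp_mul_I hr.le]
  exact mul_div_cancel_left₀ _ (ofReal_ne_zero.mpr hr.ne')

lemma Complex.norm_ofReal_mul_exp_sub_sq (p q s t : ℝ) :
    ‖(p : ℂ) * exp (s * I) - (q : ℂ) * exp (t * I)‖ ^ 2
      = p ^ 2 + q ^ 2 - 2 * p * q * Real.cos (t - s) := by
  have hprod : (p : ℂ) * exp (s * I) * (starRingEnd ℂ) ((q : ℂ) * exp (t * I))
      = ((p * q : ℝ) : ℂ) * exp ((s - t : ℝ) * I) := by
    rw [map_mul, conj_ofReal, ← exp_conj, map_mul, conj_ofReal, conj_I, mul_mul_mul_comm,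
      ← exp_add]
    push_cast
    ring_nf
  have hcross : ((p : ℂ) * exp (s * I) * (starRingEnd ℂ) ((q : ℂ) * exp (t * I))).re
      = p * q * Real.cos (t - s) := by
    rw [hprod, re_ofReal_mul, exp_ofReal_mul_I_re, ← Real.cos_neg, neg_sub]
  rw [Complex.sq_norm, normSq_sub, hcross, normSq_mul, normSq_mul, normSq_ofReal, normSq_ofReal,
    normSq_eq_norm_sq (exp _), normSq_eq_norm_sq (exp _), norm_exp_ofReal_mul_I,
    norm_exp_ofReal_mul_I]
  ring

lemma Complex.cos_sub_ne_one_of_exp_mul_I_ne {s t : ℝ} (h : exp (s * I) ≠ exp (t * I)) :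
    Real.cos (t - s) ≠ 1 := by
  rw [Ne, Real.cos_eq_one_iff]
  rintro ⟨n, hn⟩
  refine h (exp_eq_exp_iff_exists_int.mpr ⟨-n, ?_⟩)
  have ht : t = s + n * (2 * Real.pi) := by linarith
  rw [ht]
  push_cast
  ring

lemma chord_ratio_sub_mean_sq {c : ℝ} (hc : c ≠ 1) (p q : ℝ) :
    (p ^ 2 + q ^ 2 - 2 * p * q * c) / (2 - 2 * c) - ((p + q) / 2) ^ 2
      = 1 / 4 * (p - q) ^ 2 * ((1 + c) / (1 - c)) := by
  have : 1 - c ≠ 0 := sub_ne_zero.mpr hc.symm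
  have : 2 - 2 * c ≠ 0 := by intro h; apply this; linarith
  field_simp
  ring

/-- For distinct complex numbers `x = p e^{is}`, `y = q e^{it}` with `p, q > 0` and
`s ≠ t (mod 2π)`, one has
`(|x−y|/|x/|x| − y/|y||)² − ((|x|+|y|)/2)² = (1/4)(p−q)² cot²((t−s)/2) ≥ 0`. -/
theorem stmt1 (p q s t : ℝ) (hp : 0 < p) (hq : 0 < q)
    (hst : Complex.exp (s * Complex.I) ≠ Complex.exp (t * Complex.I)) :
    let x : ℂ := (p : ℂ) * Complex.exp (s * Complex.I)
    let y : ℂ := (q : ℂ) * Complex.exp (t * Complex.I)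
    (‖x - y‖ / ‖x / (‖x‖ : ℂ) - y / (‖y‖ : ℂ)‖) ^ 2
        - ((‖x‖ + ‖y‖) / 2) ^ 2
      = (1 / 4) * (p - q) ^ 2 * Real.cot ((t - s) / 2) ^ 2 ∧
    0 ≤ (1 / 4) * (p - q) ^ 2 * Real.cot ((t - s) / 2) ^ 2 := by
  intro x y
  refine ⟨?_, by positivity⟩
  have hchord : ‖exp (s * I) - exp (t * I)‖ ^ 2 = 2 - 2 * Real.cos (t - s) := by
    simpa [one_add_one_eq_two] using norm_ofReal_mul_exp_sub_sq 1 1 s t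
  rw [ofReal_mul_exp_mul_I_div_norm hp, ofReal_mul_exp_mul_I_div_norm hq, div_pow, hchord,
    norm_ofReal_mul_exp_sub_sq, norm_ofReal_mul_exp_mul_I hp.le, norm_ofReal_mul_exp_mul_I hq.le, Real.cot_half_sq,
    chord_ratio_sub_mean_sq (cos_sub_ne_one_of_exp_mul_I_ne hst)]
end

section
/- Let f: ℝⁿ → ℝⁿ be an L-bi-Lipschitz map with respect to the Euclidean metric satisfying f(0) = 0, extended to the one-point compactification by f(∞) = ∞. Then the extension is L³-bi-Lipschitz with respect to the chordal metric. -/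
/-- The chordal metric on `ℝⁿ ∪ {∞}`, with `∞` modelled by `none`. -/
noncomputable def chordal {n : ℕ} (x y : Option (EuclideanSpace ℝ (Fin n))) : ℝ :=
  match x, y with
  | some a, some b => ‖a - b‖ / (Real.sqrt (1 + ‖a‖ ^ 2) * Real.sqrt (1 + ‖b‖ ^ 2))
  | some a, none => 1 / Real.sqrt (1 + ‖a‖ ^ 2)
  | none, some b => 1 / Real.sqrt (1 + ‖b‖ ^ 2)
  | none, none => 0

/-!
Write the chordal distance as `q(x, y) = N(x, y) / (w(x) w(y))` with `w(a) = √(1 + |a|²)`,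
`w(∞) = 1`, `N(a, b) = |a - b|` and `N(·, ∞) = 1` off the diagonal. Bi-Lipschitz bounds
change `N` by a factor at most `L`, and since `f(0) = 0` they apply to `|f(a)| = |f(a) - f(0)|`,
so they change `w` by a factor at most `L` as well; hence `q` changes by at most `L · L · L`.
-/

lemma Real.sqrt_one_add_sq_le_mul {L s t : ℝ} (hL : 1 ≤ L) (hs : 0 ≤ s) (hst : s ≤ L * t) :
    √(1 + s ^ 2) ≤ L * √(1 + t ^ 2) := by
  have hsq : 1 + s ^ 2 ≤ L ^ 2 * (1 + t ^ 2) := by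
    nlinarith [pow_le_pow_left₀ hs hst 2]
  calc √(1 + s ^ 2) ≤ √(L ^ 2 * (1 + t ^ 2)) := Real.sqrt_le_sqrt hsq
    _ = L * √(1 + t ^ 2) := by rw [Real.sqrt_mul (sq_nonneg L), Real.sqrt_sq (by linarith)]

lemma div_mul_le_pow_three_mul_div_mul {L d d' v w v' w' : ℝ} (hd : d' ≤ L * d) (hd₀ : 0 ≤ d)
    (hv : v ≤ L * v') (hw : w ≤ L * w') (hv₀ : 0 < v) (hw₀ : 0 < w) (hv'₀ : 0 < v')
    (hw'₀ : 0 < w') : d' / (v' * w') ≤ L ^ 3 * (d / (v * w)) := by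
  have hL : 0 < L := pos_of_mul_pos_left (hv₀.trans_le hv) hv'₀.le
  calc d' / (v' * w') ≤ L * d / (v' * w') := by gcongr
    _ = L ^ 3 * d / ((L * v') * (L * w')) := by field_simp
    _ ≤ L ^ 3 * d / (v * w) := by gcongr
    _ = L ^ 3 * (d / (v * w)) := mul_div_assoc _ _ _

section ChordalParts

variable {E : Type*} [SeminormedAddCommGroup E]

noncomputable def chordalWeight : Option E → ℝ
  | some a => √(1 + ‖a‖ ^ 2)
  | none => 1

noncomputable def chordalNumerator : Option E → Option E → ℝ
  | some a, some b => ‖a - b‖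
  | some _, none => 1
  | none, some _ => 1
  | none, none => 0

lemma chordalWeight_pos (x : Option E) : 0 < chordalWeight x := by
  cases x <;> simp only [chordalWeight] <;> positivity

lemma chordalNumerator_nonneg (x y : Option E) : 0 ≤ chordalNumerator x y := by
  cases x <;> cases y <;> simp only [chordalNumerator] <;> positivity

lemma chordalWeight_map_le {L : ℝ} (hL : 1 ≤ L) {φ ψ : E → E} (h : ∀ a, ‖φ a‖ ≤ L * ‖ψ a‖)
    (x : Option E) : chordalWeight (x.map φ) ≤ L * chordalWeight (x.map ψ) := by
  cases x with
  | none => simpa [chordalWeight] using hL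
  | some a => exact Real.sqrt_one_add_sq_le_mul hL (norm_nonneg _) (h a)

lemma chordalNumerator_map_le {L : ℝ} (hL : 1 ≤ L) {φ ψ : E → E}
    (h : ∀ a b, ‖φ a - φ b‖ ≤ L * ‖ψ a - ψ b‖) (x y : Option E) :
    chordalNumerator (x.map φ) (y.map φ) ≤ L * chordalNumerator (x.map ψ) (y.map ψ) := by
  cases x <;> cases y <;> simp only [Option.map_none, Option.map_some, chordalNumerator]
  case none.none => simp
  case some.some a b => exact h a b
  all_goals linarith

end ChordalParts

lemma chordal_eq_chordalNumerator_div {n : ℕ} (x y : Option (EuclideanSpace ℝ (Fin n))) :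
    chordal x y = chordalNumerator x y / (chordalWeight x * chordalWeight y) := by
  cases x <;> cases y <;> simp [chordal, chordalNumerator, chordalWeight]

lemma chordal_map_le_pow_three_mul {n : ℕ} {L : ℝ} (hL : 1 ≤ L)
    {φ ψ : EuclideanSpace ℝ (Fin n) → EuclideanSpace ℝ (Fin n)}
    (hdist : ∀ a b, ‖φ a - φ b‖ ≤ L * ‖ψ a - ψ b‖) (hnorm : ∀ a, ‖ψ a‖ ≤ L * ‖φ a‖)
    (x y : Option (EuclideanSpace ℝ (Fin n))) :
    chordal (x.map φ) (y.map φ) ≤ L ^ 3 * chordal (x.map ψ) (y.map ψ) := by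
  rw [chordal_eq_chordalNumerator_div, chordal_eq_chordalNumerator_div]
  exact div_mul_le_pow_three_mul_div_mul (chordalNumerator_map_le hL hdist x y)
    (chordalNumerator_nonneg _ _) (chordalWeight_map_le hL hnorm x) (chordalWeight_map_le hL hnorm y)
    (chordalWeight_pos _) (chordalWeight_pos _) (chordalWeight_pos _) (chordalWeight_pos _)

theorem stmt3_general (n : ℕ) (L : ℝ) (hL : 1 ≤ L)
    (f : EuclideanSpace ℝ (Fin n) → EuclideanSpace ℝ (Fin n))
    (hf0 : f 0 = 0)
    (hlip : ∀ x y, ‖x - y‖ / L ≤ ‖f x - f y‖ ∧ ‖f x - f y‖ ≤ L * ‖x - y‖) :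
    ∀ x y : Option (EuclideanSpace ℝ (Fin n)),
      chordal x y / L ^ 3 ≤ chordal (Option.map f x) (Option.map f y) ∧
      chordal (Option.map f x) (Option.map f y) ≤ L ^ 3 * chordal x y := by
  have hL₀ : 0 < L := zero_lt_one.trans_le hL
  have hexpand : ∀ a b, ‖a - b‖ ≤ L * ‖f a - f b‖ := fun a b =>
    (div_le_iff₀' hL₀).1 (hlip a b).1
  have hcontract : ∀ a b, ‖f a - f b‖ ≤ L * ‖a - b‖ := fun a b => (hlip a b).2
  have hexpand₀ (a) : ‖a‖ ≤ L * ‖f a‖ := by simpa [hf0] using hexpand a 0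
  have hcontract₀ (a) : ‖f a‖ ≤ L * ‖a‖ := by simpa [hf0] using hcontract a 0
  intro x y
  constructor
  · rw [div_le_iff₀' (by positivity)]
    simpa using chordal_map_le_pow_three_mul (φ := id) hL hexpand hcontract₀ x y
  · simpa using chordal_map_le_pow_three_mul (ψ := id) hL hcontract hexpand₀ x y

/-- An `L`-bi-Lipschitz homeomorphism of `ℝⁿ` (Euclidean metric) fixing `0`, extended
by `f(∞) = ∞`, is `L³`-bi-Lipschitz with respect to the chordal metric. -/
theorem stmt3 (n : ℕ) (L : ℝ) (hL : 1 ≤ L)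
    (f : EuclideanSpace ℝ (Fin n) → EuclideanSpace ℝ (Fin n))
    (hbij : Function.Bijective f) (hf0 : f 0 = 0)
    (hlip : ∀ x y, ‖x - y‖ / L ≤ ‖f x - f y‖ ∧ ‖f x - f y‖ ≤ L * ‖x - y‖) :
    ∀ x y : Option (EuclideanSpace ℝ (Fin n)),
      chordal x y / L ^ 3 ≤ chordal (Option.map f x) (Option.map f y) ∧
      chordal (Option.map f x) (Option.map f y) ≤ L ^ 3 * chordal x y :=
  stmt3_general n L hL f hf0 hlip
end

section
/- Let f: ℝⁿ ∪ {∞} → ℝⁿ ∪ {∞} with f(0) = 0 and f(∞) = ∞ be L-bi-Lipschitz with respect to the chordal metric. Then the restriction of f to ℝⁿ is L³-bi-Lipschitz with respect to the Euclidean metric. -/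
lemma key_aux (L a b Sx Sy Su Sv : ℝ) (hL : 1 ≤ L) (ha : 0 ≤ a)
    (hSx : 0 < Sx) (hSy : 0 < Sy) (hSu : 0 < Su) (hSv : 0 < Sv)
    (h2 : b / (Su * Sv) ≤ L * (a / (Sx * Sy)))
    (hu : Su ≤ L * Sx) (hv : Sv ≤ L * Sy) :
    b ≤ L ^ 3 * a := by
  rw [mul_div_assoc'] at h2
  rw [div_le_div_iff₀ (by positivity) (by positivity)] at h2
  have huv : Su * Sv ≤ (L * Sx) * (L * Sy) :=
    mul_le_mul hu hv hSv.le (by positivity)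
  have hL0 : 0 < L := lt_of_lt_of_le one_pos hL
  have : b * (Sx * Sy) ≤ L ^ 3 * a * (Sx * Sy) := by
    calc b * (Sx * Sy) ≤ L * a * (Su * Sv) := h2
    _ ≤ L * a * ((L * Sx) * (L * Sy)) := by
        apply mul_le_mul_of_nonneg_left huv (by positivity)
    _ = L ^ 3 * a * (Sx * Sy) := by ring
  exact le_of_mul_le_mul_right this (by positivity)

/-- If `f : ℝⁿ ∪ {∞} → ℝⁿ ∪ {∞}` with `f(0) = 0`, `f(∞) = ∞` is `L`-bi-Lipschitz for the
chordal metric, then its restriction to `ℝⁿ` is `L³`-bi-Lipschitz for the Euclidean metric. -/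
theorem stmt4 (n : ℕ) (L : ℝ) (hL : 1 ≤ L)
    (f : Option (EuclideanSpace ℝ (Fin n)) → Option (EuclideanSpace ℝ (Fin n)))
    (hbij : Function.Bijective f) (hf0 : f (some 0) = some 0) (hfinf : f none = none)
    (hlip : ∀ x y, chordal x y / L ≤ chordal (f x) (f y) ∧
      chordal (f x) (f y) ≤ L * chordal x y) :
    ∀ x y u v : EuclideanSpace ℝ (Fin n), f (some x) = some u → f (some y) = some v →
      ‖x - y‖ / L ^ 3 ≤ ‖u - v‖ ∧ ‖u - v‖ ≤ L ^ 3 * ‖x - y‖ := by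
  intro x y u v hu hv
  have hL0 : 0 < L := lt_of_lt_of_le one_pos hL
  have hSx : (0:ℝ) < Real.sqrt (1 + ‖x‖ ^ 2) := Real.sqrt_pos.mpr (by positivity)
  have hSy : (0:ℝ) < Real.sqrt (1 + ‖y‖ ^ 2) := Real.sqrt_pos.mpr (by positivity)
  have hSu : (0:ℝ) < Real.sqrt (1 + ‖u‖ ^ 2) := Real.sqrt_pos.mpr (by positivity)
  have hSv : (0:ℝ) < Real.sqrt (1 + ‖v‖ ^ 2) := Real.sqrt_pos.mpr (by positivity)
  obtain ⟨h1, h2⟩ := hlip (some x) (some y)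
  rw [hu, hv] at h1 h2
  obtain ⟨h3, h4⟩ := hlip (some x) none
  rw [hu, hfinf] at h3 h4
  obtain ⟨h5, h6⟩ := hlip (some y) none
  rw [hv, hfinf] at h5 h6
  simp only [chordal] at h1 h2 h3 h4 h5 h6
  -- h3 : (1/Sx)/L ≤ 1/Su  gives  Su ≤ L * Sx
  have hux : Real.sqrt (1 + ‖u‖ ^ 2) ≤ L * Real.sqrt (1 + ‖x‖ ^ 2) := by
    rw [div_div, div_le_div_iff₀ (by positivity) hSu, one_mul] at h3
    linarith
  have hxu : Real.sqrt (1 + ‖x‖ ^ 2) ≤ L * Real.sqrt (1 + ‖u‖ ^ 2) := by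
    rw [mul_one_div, div_le_div_iff₀ hSu hSx, one_mul] at h4
    linarith
  have hvy : Real.sqrt (1 + ‖v‖ ^ 2) ≤ L * Real.sqrt (1 + ‖y‖ ^ 2) := by
    rw [div_div, div_le_div_iff₀ (by positivity) hSv, one_mul] at h5
    linarith
  have hyv : Real.sqrt (1 + ‖y‖ ^ 2) ≤ L * Real.sqrt (1 + ‖v‖ ^ 2) := by
    rw [mul_one_div, div_le_div_iff₀ hSv hSy, one_mul] at h6
    linarith
  constructor
  · rw [div_le_iff₀ (by positivity)]
    have h1' : ‖x - y‖ / (Real.sqrt (1 + ‖x‖ ^ 2) * Real.sqrt (1 + ‖y‖ ^ 2)) ≤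
        L * (‖u - v‖ / (Real.sqrt (1 + ‖u‖ ^ 2) * Real.sqrt (1 + ‖v‖ ^ 2))) := by
      rw [div_le_iff₀ hL0] at h1
      linarith [h1]
    have := key_aux L ‖u - v‖ ‖x - y‖ _ _ _ _ hL (norm_nonneg _) hSu hSv hSx hSy h1' hxu hyv
    linarith
  · exact key_aux L ‖x - y‖ ‖u - v‖ _ _ _ _ hL (norm_nonneg _) hSx hSy hSu hSv h2 hux hvy
end

section
/- Suppose g: [0,1] → ℝ is a function such that M := sup over t of (limsup as s → t of |g(s) − g(t)|/|t − s|) is finite. Then g is M-Lipschitz continuous on [0,1]. -/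
open Filter

/-- Chaining lemma: a local Lipschitz-type bound at every point of `[0,1]`
gives the global bound, via a `csSup` argument. -/
lemma stmt5_key (g : ℝ → ℝ) (K : ℝ)
    (h : ∀ u ∈ Set.Icc (0:ℝ) 1, ∃ δ > (0:ℝ), ∀ v ∈ Set.Icc (0:ℝ) 1,
        |v - u| < δ → |g v - g u| ≤ K * |v - u|) :
    ∀ t ∈ Set.Icc (0:ℝ) 1, ∀ s ∈ Set.Icc (0:ℝ) 1, t ≤ s →
      |g s - g t| ≤ K * (s - t) := by
  intro t ht s hs hts
  set A : Set ℝ := {u | u ∈ Set.Icc t s ∧ |g u - g t| ≤ K * (u - t)} with hA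
  have hAne : t ∈ A := ⟨⟨le_refl _, hts⟩, by simp⟩
  have hAbdd : BddAbove A := ⟨s, fun u hu => hu.1.2⟩
  set c := sSup A with hc
  have hcmem : c ∈ Set.Icc t s :=
    ⟨le_csSup hAbdd hAne, csSup_le ⟨t, hAne⟩ (fun u hu => hu.1.2)⟩
  have hc01 : c ∈ Set.Icc (0:ℝ) 1 := ⟨le_trans ht.1 hcmem.1, le_trans hcmem.2 hs.2⟩
  obtain ⟨δ, hδ, hδprop⟩ := h c hc01
  have hcA : |g c - g t| ≤ K * (c - t) := by
    obtain ⟨u, huA, hu⟩ := exists_lt_of_lt_csSup ⟨t, hAne⟩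
      (show c - δ < c by linarith)
    have huc : u ≤ c := le_csSup hAbdd huA
    have hu01 : u ∈ Set.Icc (0:ℝ) 1 := ⟨le_trans ht.1 huA.1.1, le_trans huA.1.2 hs.2⟩
    have habs : |u - c| < δ := by rw [abs_of_nonpos (by linarith)]; linarith
    have h1 : |g u - g c| ≤ K * (c - u) := by
      have := hδprop u hu01 habs
      rwa [abs_of_nonpos (by linarith : u - c ≤ 0), neg_sub] at this
    calc |g c - g t| ≤ |g c - g u| + |g u - g t| := abs_sub_le _ _ _
      _ ≤ K * (c - u) + K * (u - t) := by
          rw [abs_sub_comm]; exact add_le_add h1 huA.2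
      _ = K * (c - t) := by ring
  have hcs : c = s := by
    by_contra hne
    have hcs : c < s := lt_of_le_of_ne hcmem.2 hne
    set v := min (c + δ/2) s with hv
    have hvc : c < v := lt_min (by linarith) hcs
    have hvs : v ≤ s := min_le_right _ _
    have hvδ : |v - c| < δ := by
      rw [abs_of_nonneg (by linarith)]
      have : v ≤ c + δ/2 := min_le_left _ _
      linarith
    have hv01 : v ∈ Set.Icc (0:ℝ) 1 :=
      ⟨le_trans hc01.1 (le_of_lt hvc), le_trans hvs hs.2⟩
    have h1 : |g v - g c| ≤ K * (v - c) := by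
      have := hδprop v hv01 hvδ
      rwa [abs_of_nonneg (by linarith : (0:ℝ) ≤ v - c)] at this
    have hvA : v ∈ A := by
      refine ⟨⟨le_trans hcmem.1 (le_of_lt hvc), hvs⟩, ?_⟩
      calc |g v - g t| ≤ |g v - g c| + |g c - g t| := abs_sub_le _ _ _
        _ ≤ K * (v - c) + K * (c - t) := add_le_add h1 hcA
        _ = K * (v - t) := by ring
    exact absurd (le_csSup hAbdd hvA) (not_le.mpr hvc)
  rw [← hcs]; exact hcA

/-- If `g : [0,1] → ℝ` satisfies `limsup_{s→t} |g(s)−g(t)|/|s−t| ≤ M` at every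
point `t ∈ [0,1]`, then `g` is `M`-Lipschitz on `[0,1]`. -/
theorem stmt5 (g : ℝ → ℝ) (M : ℝ)
    (h : ∀ t ∈ Set.Icc (0 : ℝ) 1, ∀ ε > (0 : ℝ),
      ∀ᶠ s in nhdsWithin t (Set.Icc (0 : ℝ) 1 \ {t}), |g s - g t| / |s - t| < M + ε) :
    ∀ s ∈ Set.Icc (0 : ℝ) 1, ∀ t ∈ Set.Icc (0 : ℝ) 1, |g s - g t| ≤ M * |s - t| := by
  -- local bound for each ε > 0
  have hloc : ∀ ε > (0:ℝ), ∀ u ∈ Set.Icc (0:ℝ) 1, ∃ δ > (0:ℝ),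
      ∀ v ∈ Set.Icc (0:ℝ) 1, |v - u| < δ → |g v - g u| ≤ (M + ε) * |v - u| := by
    intro ε hε u hu
    have hev := h u hu ε hε
    obtain ⟨δ, hδ, hprop⟩ := Metric.mem_nhdsWithin_iff.mp hev
    refine ⟨δ, hδ, fun v hv hvd => ?_⟩
    rcases eq_or_ne v u with rfl | hne
    · simp
    · have hd : (0:ℝ) < |v - u| := abs_pos.mpr (sub_ne_zero.mpr hne)
      have hvb : v ∈ Metric.ball u δ := by rwa [Metric.mem_ball, Real.dist_eq]
      have := hprop ⟨hvb, hv, hne⟩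
      exact le_of_lt ((div_lt_iff₀ hd).mp this)
  -- global bound with M + ε
  have hglob : ∀ ε > (0:ℝ), ∀ s ∈ Set.Icc (0:ℝ) 1, ∀ t ∈ Set.Icc (0:ℝ) 1,
      |g s - g t| ≤ (M + ε) * |s - t| := by
    intro ε hε s hs t ht
    rcases le_total t s with hts | hst
    · have := stmt5_key g (M + ε) (hloc ε hε) t ht s hs hts
      rwa [abs_of_nonneg (by linarith : (0:ℝ) ≤ s - t)]
    · have := stmt5_key g (M + ε) (hloc ε hε) s hs t ht hst
      rw [abs_sub_comm (g s), abs_sub_comm s t,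
        abs_of_nonneg (by linarith : (0:ℝ) ≤ t - s)]
      exact this
  intro s hs t ht
  rcases eq_or_ne s t with rfl | hne
  · simp
  · have hd : (0:ℝ) < |s - t| := abs_pos.mpr (sub_ne_zero.mpr hne)
    refine le_of_forall_pos_le_add (fun ε hε => ?_)
    have := hglob (ε / |s - t|) (div_pos hε hd) s hs t ht
    calc |g s - g t| ≤ (M + ε / |s - t|) * |s - t| := this
      _ = M * |s - t| + ε := by field_simp
end

section
/- Let f(x) = x/|x|² be the inversion in the unit sphere of ℝⁿ, extended to ℝⁿ ∪ {∞} by f(0) = ∞ and f(∞) = 0. Then f is an isometry with respect to the chordal metric: q(f(x), f(y)) = q(x, y) for all x, y. -/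
open scoped Classical in
/-- The inversion `x ↦ x/‖x‖²` in the unit sphere, extended by `0 ↦ ∞`, `∞ ↦ 0`. -/
noncomputable def sphereInversion {n : ℕ} (x : Option (EuclideanSpace ℝ (Fin n))) :
    Option (EuclideanSpace ℝ (Fin n)) :=
  match x with
  | none => some 0
  | some a => if a = 0 then none else some ((‖a‖ ^ 2)⁻¹ • a)

/-
Inversion multiplies distances by `1 / (‖a‖ ‖b‖)` and turns `√(1 + ‖a‖²)` into `√(1 + ‖a‖²) / ‖a‖`,
so the factors `‖a‖ ‖b‖` cancel in the chordal quotient. The cases involving `0` and `∞` are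
the same computation with one of the two points at the origin.
-/

section InverseSmul

theorem norm_inv_sq_smul {F : Type*} [NormedAddCommGroup F] [NormedSpace ℝ F] (a : F) :
    ‖(‖a‖ ^ 2)⁻¹ • a‖ = ‖a‖⁻¹ := by
  rcases eq_or_ne a 0 with rfl | ha
  · simp
  rw [norm_smul, norm_inv, norm_pow, norm_norm]
  field_simp [norm_ne_zero_iff.mpr ha]

theorem sqrt_one_add_norm_inv_sq_smul_sq {F : Type*} [NormedAddCommGroup F] [NormedSpace ℝ F]
    {a : F} (ha : a ≠ 0) :
    √(1 + ‖(‖a‖ ^ 2)⁻¹ • a‖ ^ 2) = √(1 + ‖a‖ ^ 2) / ‖a‖ := by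
  have hpos : 0 < ‖a‖ := norm_pos_iff.mpr ha
  have h : 1 + ‖a‖⁻¹ ^ 2 = (1 + ‖a‖ ^ 2) / ‖a‖ ^ 2 := by field_simp; ring
  rw [norm_inv_sq_smul, h, Real.sqrt_div (by positivity), Real.sqrt_sq hpos.le]

theorem norm_inv_sq_smul_sub_inv_sq_smul {F : Type*} [NormedAddCommGroup F]
    [InnerProductSpace ℝ F] {a b : F} (ha : a ≠ 0) (hb : b ≠ 0) :
    ‖(‖a‖ ^ 2)⁻¹ • a - (‖b‖ ^ 2)⁻¹ • b‖ = ‖a - b‖ / (‖a‖ * ‖b‖) := by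
  have h := dist_div_norm_sq_smul ha hb 1
  simp only [one_div, inv_pow, one_pow, dist_eq_norm] at h
  rw [h, inv_mul_eq_div]

end InverseSmul

section Chordal

variable {n : ℕ}

theorem chordal_comm (x y : Option (EuclideanSpace ℝ (Fin n))) : chordal x y = chordal y x := by
  rcases x with _ | a <;> rcases y with _ | b <;> simp only [chordal]
  rw [norm_sub_rev, mul_comm]

theorem chordal_sphereInversion_none (y : Option (EuclideanSpace ℝ (Fin n))) :
    chordal (sphereInversion none) (sphereInversion y) = chordal none y := by
  rcases y with _ | b
  · simp [chordal, sphereInversion]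
  rcases eq_or_ne b 0 with rfl | hb
  · simp [chordal, sphereInversion]
  simp only [chordal, sphereInversion, if_neg hb]
  rw [zero_sub, norm_neg, norm_zero, sqrt_one_add_norm_inv_sq_smul_sq hb, norm_inv_sq_smul]
  field_simp
  norm_num

theorem chordal_sphereInversion_some_zero (b : EuclideanSpace ℝ (Fin n)) :
    chordal (sphereInversion (some 0)) (sphereInversion (some b)) = chordal (some 0) (some b) := by
  rcases eq_or_ne b 0 with rfl | hb
  · simp [chordal, sphereInversion]
  simp only [chordal, sphereInversion, if_neg hb, if_true]
  rw [zero_sub, norm_neg, norm_zero, sqrt_one_add_norm_inv_sq_smul_sq hb]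
  field_simp
  norm_num

theorem chordal_sphereInversion_some_some {a b : EuclideanSpace ℝ (Fin n)} (ha : a ≠ 0)
    (hb : b ≠ 0) :
    chordal (sphereInversion (some a)) (sphereInversion (some b)) = chordal (some a) (some b) := by
  simp only [chordal, sphereInversion, if_neg ha, if_neg hb]
  rw [norm_inv_sq_smul_sub_inv_sq_smul ha hb, sqrt_one_add_norm_inv_sq_smul_sq ha,
    sqrt_one_add_norm_inv_sq_smul_sq hb, div_mul_div_comm,
    div_div_div_cancel_right₀ (mul_ne_zero (norm_ne_zero_iff.mpr ha) (norm_ne_zero_iff.mpr hb))]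

end Chordal

/-- The inversion in the unit sphere is an isometry for the chordal metric. -/
theorem stmt7 (n : ℕ) (x y : Option (EuclideanSpace ℝ (Fin n))) :
    chordal (sphereInversion x) (sphereInversion y) = chordal x y := by
  rcases x with _ | a
  · exact chordal_sphereInversion_none y
  rcases y with _ | b
  · rw [chordal_comm, chordal_sphereInversion_none, chordal_comm]
  rcases eq_or_ne a 0 with rfl | ha
  · exact chordal_sphereInversion_some_zero b
  rcases eq_or_ne b 0 with rfl | hb
  · rw [chordal_comm, chordal_sphereInversion_some_zero, chordal_comm]
  exact chordal_sphereInversion_some_some ha hb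
end

section
/- Let M be a compact set in ℝⁿ \ {0} that is the boundary of a bounded domain strictly starlike with respect to 0, given by a radial function r: S^{n-1} → (0,∞), and let f_M(x) = r(x/|x|)²·x/|x|² be the quasi-inversion. Then for x, y ∈ ℝⁿ \ {0} with |x| ≤ |y|, setting λ = (|f_M(y)| + |f_M(x) − f_M(y)|)/|f_M(y)| and z = λx, one has |f_M(x) − f_M(z)| ≤ |f_M(x) − f_M(y)| ≤ (2 r_y²/r_x² + 1)·|f_M(x) − f_M(z)|, where r_x = r(x/|x|) and r_y = r(y/|y|). -/
/-!
The quasi-inversion maps each open ray from the origin to itself and satisfies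
`f_M(λ w) = λ⁻¹ f_M(w)` for `λ > 0`. Hence `f_M(x) - f_M(z) = (1 - λ⁻¹) f_M(x)`, whose norm is
`a D / (b + D)` with `a = |f_M(x)| = r_x²/|x|`, `b = |f_M(y)| = r_y²/|y|`, `D = |f_M(x) - f_M(y)|`.
Both inequalities then follow from the triangle inequalities `a ≤ b + D`, `D ≤ a + b` and from
`b ≤ r_y²/|x| = (r_y²/r_x²) a`, which is where `|x| ≤ |y|` enters.
-/

section QuasiInversion

variable {E : Type*} [NormedAddCommGroup E] [NormedSpace ℝ E]

noncomputable def quasiInversion (r : E → ℝ) (w : E) : E :=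
  (r (‖w‖⁻¹ • w) ^ 2 / ‖w‖ ^ 2) • w

theorem norm_quasiInversion (r : E → ℝ) {w : E} (hw : w ≠ 0) :
    ‖quasiInversion r w‖ = r (‖w‖⁻¹ • w) ^ 2 / ‖w‖ := by
  have hw' : 0 < ‖w‖ := norm_pos_iff.mpr hw
  rw [quasiInversion, norm_smul, Real.norm_of_nonneg (by positivity)]
  field_simp

theorem quasiInversion_smul_of_pos (r : E → ℝ) {c : ℝ} (hc : 0 < c) (w : E) :
    quasiInversion r (c • w) = c⁻¹ • quasiInversion r w := by
  rcases eq_or_ne w 0 with rfl | hw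
  · simp [quasiInversion]
  have hw' : 0 < ‖w‖ := norm_pos_iff.mpr hw
  have hcw : ‖c • w‖ = c * ‖w‖ := by rw [norm_smul, Real.norm_of_nonneg hc.le]
  have hdir : ‖c • w‖⁻¹ • c • w = ‖w‖⁻¹ • w := by
    rw [hcw, smul_smul, mul_inv, mul_right_comm, inv_mul_cancel₀ hc.ne', one_mul]
  rw [quasiInversion, quasiInversion, hdir, hcw, smul_smul, smul_smul]
  congr 1
  field_simp

theorem norm_sub_inv_smul_self_of_one_le {t : ℝ} (ht : 1 ≤ t) (v : E) :
    ‖v - t⁻¹ • v‖ = (1 - t⁻¹) * ‖v‖ := by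
  rw [show v - t⁻¹ • v = (1 - t⁻¹) • v by rw [sub_smul, one_smul], norm_smul, Real.norm_of_nonneg (sub_nonneg.2 (inv_le_one_of_one_le₀ ht))]

end QuasiInversion

theorem mul_div_add_le_of_le_add {a b D : ℝ} (hbD : 0 < b + D) (hD : 0 ≤ D) (h : a ≤ b + D) :
    a * D / (b + D) ≤ D := by
  rw [div_le_iff₀ hbD, mul_comm D]
  exact mul_le_mul_of_nonneg_right h hD

theorem le_mul_mul_div_add_of_le_add {a b D k : ℝ} (hb : 0 < b) (hD : 0 ≤ D)
    (h : D ≤ a + b) (hk : b ≤ k * a) : D ≤ (2 * k + 1) * (a * D / (b + D)) := by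
  rw [mul_div_assoc', le_div_iff₀ (by linarith)]
  nlinarith [mul_le_mul_of_nonneg_right (show b + D ≤ (2 * k + 1) * a by linarith) hD]

theorem stmt10_general (n : ℕ) (r : EuclideanSpace ℝ (Fin n) → ℝ)
    (hr : ∀ u, ‖u‖ = 1 → 0 < r u)
    (x y : EuclideanSpace ℝ (Fin n)) (hx : x ≠ 0) (hy : y ≠ 0) (hxy : ‖x‖ ≤ ‖y‖) :
    let fM : EuclideanSpace ℝ (Fin n) → EuclideanSpace ℝ (Fin n) :=
      fun w => (r (‖w‖⁻¹ • w) ^ 2 / ‖w‖ ^ 2) • w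
    let lam : ℝ := (‖fM y‖ + ‖fM x - fM y‖) / ‖fM y‖
    let z := lam • x
    ‖fM x - fM z‖ ≤ ‖fM x - fM y‖ ∧
    ‖fM x - fM y‖ ≤ (2 * r (‖y‖⁻¹ • y) ^ 2 / r (‖x‖⁻¹ • x) ^ 2 + 1) * ‖fM x - fM z‖ := by
  intro fM lam z
  set a := ‖fM x‖
  set b := ‖fM y‖
  set D := ‖fM x - fM y‖
  have ha : a = r (‖x‖⁻¹ • x) ^ 2 / ‖x‖ := norm_quasiInversion r hx
  have hb : b = r (‖y‖⁻¹ • y) ^ 2 / ‖y‖ := norm_quasiInversion r hy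
  have hrx : 0 < r (‖x‖⁻¹ • x) := hr _ (norm_smul_inv_norm hx)
  have hry : 0 < r (‖y‖⁻¹ • y) := hr _ (norm_smul_inv_norm hy)
  have hnx : 0 < ‖x‖ := norm_pos_iff.mpr hx
  have hny : 0 < ‖y‖ := hnx.trans_le hxy
  have hb_pos : 0 < b := by rw [hb]; positivity
  have hD : 0 ≤ D := norm_nonneg _
  have hlam : lam = (b + D) / b := rfl
  have hz : ‖fM x - fM z‖ = a * D / (b + D) := by
    have hfz : fM z = lam⁻¹ • fM x :=
      quasiInversion_smul_of_pos r (by rw [hlam]; positivity) x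
    rw [hfz, norm_sub_inv_smul_self_of_one_le (by rw [hlam, le_div_iff₀ hb_pos]; linarith),
      hlam, inv_div]
    field_simp
    ring
  have hk : b ≤ r (‖y‖⁻¹ • y) ^ 2 / r (‖x‖⁻¹ • x) ^ 2 * a := by
    rw [ha, hb, div_mul_div_cancel₀ (by positivity)]
    gcongr
  rw [hz, mul_div_assoc (2 : ℝ)]
  exact ⟨mul_div_add_le_of_le_add (by positivity) hD (by linarith [norm_sub_norm_le (fM x) (fM y)]),
    le_mul_mul_div_add_of_le_add hb_pos hD (norm_sub_le _ _) hk⟩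

/-- For the quasi-inversion `f_M(x) = r(x/|x|)² x/|x|²` in the boundary `M` of a strictly
starlike domain given by the radial function `r`, with nonzero `x, y`, `|x| ≤ |y|`,
`λ = (|f_M(y)|+|f_M(x)−f_M(y)|)/|f_M(y)|` and `z = λx`, one has
`|f_M(x)−f_M(z)| ≤ |f_M(x)−f_M(y)| ≤ (2r_y²/r_x²+1)|f_M(x)−f_M(z)|`. -/
theorem stmt10 (n : ℕ) (r : EuclideanSpace ℝ (Fin n) → ℝ)
    (hr : ∀ u, ‖u‖ = 1 → 0 < r u) (hrc : Continuous r)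
    (x y : EuclideanSpace ℝ (Fin n)) (hx : x ≠ 0) (hy : y ≠ 0) (hxy : ‖x‖ ≤ ‖y‖) :
    let fM : EuclideanSpace ℝ (Fin n) → EuclideanSpace ℝ (Fin n) :=
      fun w => (r (‖w‖⁻¹ • w) ^ 2 / ‖w‖ ^ 2) • w
    let lam : ℝ := (‖fM y‖ + ‖fM x - fM y‖) / ‖fM y‖
    let z := lam • x
    ‖fM x - fM z‖ ≤ ‖fM x - fM y‖ ∧
    ‖fM x - fM y‖ ≤ (2 * r (‖y‖⁻¹ • y) ^ 2 / r (‖x‖⁻¹ • x) ^ 2 + 1) * ‖fM x - fM z‖ :=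
  stmt10_general n r hr x y hx hy hxy
end

section
/- Let E ⊂ ℝ be an interval and g: E → ℝ a function such that for every x ∈ E, the upper derivative |D⁺g(x)| := limsup_{y→x} |g(x) − g(y)|/|x − y| satisfies |D⁺g(x)| ≤ M. Then the outer Lebesgue measure of g(E) is at most M times the length of E. -/
open Filter Set Topology

/-!
A pointwise bound `|g x - g y| ≤ (M + ε) |x - y|` for `y` near `x` propagates along the interval,
by a right-Dini-derivative comparison with the line of slope `M + ε`, to a global
`(M + ε)`-Lipschitz bound. A Lipschitz map scales the one-dimensional Hausdorff measure, i.e.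
Lebesgue measure, by at most its constant; letting `ε → 0` gives the bound `M (b - a)`.
-/

lemma continuousWithinAt_of_eventually_abs_sub_le {g : ℝ → ℝ} {s : Set ℝ} {x K : ℝ}
    (h : ∀ᶠ y in 𝓝[s \ {x}] x, |g x - g y| ≤ K * |x - y|) : ContinuousWithinAt g s x := by
  rw [← continuousWithinAt_sdiff_self, ContinuousWithinAt, tendsto_iff_dist_tendsto_zero]
  have hlin : Tendsto (fun y => K * |x - y|) (𝓝[s \ {x}] x) (𝓝 0) := by
    have hc : Continuous fun y => K * |x - y| := by fun_prop
    simpa using (hc.tendsto x).mono_left nhdsWithin_le_nhds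
  refine squeeze_zero' (Eventually.of_forall fun _ => dist_nonneg) ?_ hlin
  filter_upwards [h] with y hy
  rwa [Real.dist_eq, abs_sub_comm]

lemma abs_sub_le_of_eventually_abs_sub_le_right {g : ℝ → ℝ} {a b K : ℝ} (hab : a ≤ b)
    (hg : ContinuousOn g (Icc a b))
    (h : ∀ x ∈ Ico a b, ∀ᶠ y in 𝓝[>] x, |g y - g x| ≤ K * (y - x)) :
    |g b - g a| ≤ K * (b - a) := by
  refine image_le_of_liminf_slope_right_le_deriv_boundary (f := fun y => |g y - g a|)
    (B := fun y => K * (y - a)) (B' := fun _ => K) (by fun_prop) (by simp) (by fun_prop)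
    (fun x _ => ((hasDerivAt_id x).sub_const a).const_mul K |>.hasDerivWithinAt |>.congr_deriv
      (mul_one K)) ?_ (right_mem_Icc.2 hab)
  intro x hx r hr
  refine Eventually.frequently ?_
  filter_upwards [h x hx, self_mem_nhdsWithin] with y hy hxy
  have hpos : 0 < y - x := sub_pos.2 hxy
  have hinc : |g y - g a| - |g x - g a| ≤ K * (y - x) :=
    calc |g y - g a| - |g x - g a| ≤ |(g y - g a) - (g x - g a)| := abs_sub_abs_le_abs_sub _ _
      _ = |g y - g x| := by ring_nf
      _ ≤ K * (y - x) := hy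
  rw [slope_def_field, div_lt_iff₀ hpos]
  nlinarith

lemma Set.OrdConnected.lipschitzOnWith_of_eventually_abs_sub_le {g : ℝ → ℝ} {s : Set ℝ} {K : ℝ}
    (hs : s.OrdConnected) (h : ∀ x ∈ s, ∀ᶠ y in 𝓝[s \ {x}] x, |g x - g y| ≤ K * |x - y|) :
    LipschitzOnWith K.toNNReal g s := by
  have hcont : ContinuousOn g s := fun x hx => continuousWithinAt_of_eventually_abs_sub_le (h x hx)
  have hle : ∀ x ∈ s, ∀ y ∈ s, x ≤ y → |g y - g x| ≤ K * (y - x) := by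
    intro x hx y hy hxy
    refine abs_sub_le_of_eventually_abs_sub_le_right hxy (hcont.mono (hs.out hx hy)) ?_
    intro z hz
    have hzs : z ∈ s := hs.out hx hy (Ico_subset_Icc_self hz)
    have hnhds : s \ {z} ∈ 𝓝[>] z :=
      mem_of_superset (Ioo_mem_nhdsGT hz.2) fun w hw =>
        ⟨hs.out hzs hy ⟨hw.1.le, hw.2.le⟩, hw.1.ne'⟩
    filter_upwards [nhdsWithin_le_of_mem hnhds (h z hzs), self_mem_nhdsWithin] with w hw hzw
    rwa [abs_sub_comm (g z), abs_sub_comm z, abs_of_pos (sub_pos.2 (mem_Ioi.1 hzw))] at hw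
  refine LipschitzOnWith.of_dist_le' fun x hx y hy => ?_
  rw [Real.dist_eq, Real.dist_eq]
  rcases le_total x y with hxy | hyx
  · rw [abs_sub_comm (g x), abs_sub_comm x, abs_of_nonneg (sub_nonneg.2 hxy)]
    exact hle x hx y hy hxy
  · rw [abs_of_nonneg (sub_nonneg.2 hyx)]
    exact hle y hy x hx hyx

lemma LipschitzOnWith.volume_image_le {g : ℝ → ℝ} {s : Set ℝ} {K : NNReal}
    (hg : LipschitzOnWith K g s) : MeasureTheory.volume (g '' s) ≤ K * MeasureTheory.volume s := by
  simpa [MeasureTheory.hausdorffMeasure_real] using hg.hausdorffMeasure_image_le zero_le_one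

/-- If `g` on an interval `E = [a,b]` has upper derivative bounded by `M` at every
point, then the outer Lebesgue measure of `g(E)` is at most `M` times the length of `E`. -/
theorem stmt12 (a b : ℝ) (hab : a ≤ b) (g : ℝ → ℝ) (M : ℝ)
    (h : ∀ x ∈ Set.Icc a b, ∀ ε > (0 : ℝ),
      ∀ᶠ y in nhdsWithin x (Set.Icc a b \ {x}), |g x - g y| ≤ (M + ε) * |x - y|) :
    MeasureTheory.volume (g '' Set.Icc a b) ≤ ENNReal.ofReal (M * (b - a)) := by
  have hbound : ∀ ε > (0 : ℝ),
      MeasureTheory.volume (g '' Icc a b) ≤ ENNReal.ofReal ((M + ε) * (b - a)) := by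
    intro ε hε
    have hlip := ordConnected_Icc.lipschitzOnWith_of_eventually_abs_sub_le fun x hx => h x hx ε hε
    calc MeasureTheory.volume (g '' Icc a b)
        ≤ ENNReal.ofReal (M + ε) * MeasureTheory.volume (Icc a b) := hlip.volume_image_le
      _ = ENNReal.ofReal ((M + ε) * (b - a)) := by
        rw [Real.volume_Icc, ENNReal.ofReal_mul' (sub_nonneg.2 hab)]
  have hlim : Tendsto (fun ε => ENNReal.ofReal ((M + ε) * (b - a))) (𝓝[>] 0)
      (𝓝 (ENNReal.ofReal (M * (b - a)))) := by
    have hc : Continuous fun ε => ENNReal.ofReal ((M + ε) * (b - a)) :=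
      ENNReal.continuous_ofReal.comp (by fun_prop)
    simpa using (hc.tendsto 0).mono_left nhdsWithin_le_nhds
  exact ge_of_tendsto hlim (eventually_nhdsWithin_of_forall hbound)
end

section
/- Let A be an invertible real n×n matrix with singular values λ₁ ≤ ⋯ ≤ λₙ (all positive). Define H_I(A) = |det A| / λ₁ⁿ, H_O(A) = λₙⁿ / |det A|, and H(A) = λₙ/λ₁. Then H(A) ≤ min{H_I(A), H_O(A)} ≤ H(A)^{n/2} and H(A)^{n/2} ≤ max{H_I(A), H_O(A)} ≤ H(A)^{n-1}. -/
/-!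
Write `P = ∏ λᵢ`. Since `det (A Aᵀ) = (det A)²` is the product of the eigenvalues `λᵢ²`,
`|det A| = P`. Bounding all factors of `P` but one by `λ₁` or by `λₙ` gives
`λₙ λ₁ⁿ⁻¹ ≤ P ≤ λ₁ λₙⁿ⁻¹`, which is exactly `H ≤ H_I, H_O ≤ Hⁿ⁻¹`. The remaining two
inequalities hold because `H_I · H_O = Hⁿ`, so `H^(n/2)` is the geometric mean of `H_I` and `H_O`.
-/

open Finset
open scoped Matrix

theorem Matrix.abs_det_eq_prod_of_eigenvalues_mul_transpose {ι : Type*} [Fintype ι]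
    [DecidableEq ι] {A : Matrix ι ι ℝ} (hA : (A * Aᵀ).IsHermitian) {s : ι → ℝ}
    (hs : ∀ i, 0 ≤ s i) (σ : Equiv.Perm ι) (hσ : ∀ i, hA.eigenvalues (σ i) = s i ^ 2) :
    |A.det| = ∏ i, s i := by
  have hsq : A.det ^ 2 = (∏ i, s i) ^ 2 := calc
    A.det ^ 2 = (A * Aᵀ).det := by rw [Matrix.det_mul, Matrix.det_transpose, sq]
    _ = ∏ i, hA.eigenvalues (σ i) := by rw [hA.det_eq_prod_eigenvalues, ← Equiv.prod_comp σ]; rfl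
    _ = (∏ i, s i) ^ 2 := by simp only [hσ, prod_pow]
  rw [← Real.sqrt_sq_eq_abs, hsq, Real.sqrt_sq (prod_nonneg fun i _ => hs i)]

section ProdBounds

variable {ι R : Type*} [Fintype ι] [DecidableEq ι] [CommSemiring R] [PartialOrder R]
  [IsOrderedRing R] {f : ι → R}

theorem mul_pow_le_prod_of_forall_le {a : R} (ha : 0 ≤ a) (h : ∀ i, a ≤ f i) (k : ι) :
    f k * a ^ (Fintype.card ι - 1) ≤ ∏ i, f i := by
  rw [← mul_prod_erase univ f (mem_univ k), ← card_univ, ← card_erase_of_mem (mem_univ k)]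
  refine mul_le_mul_of_nonneg_left ?_ (ha.trans (h k))
  exact (prod_const a).symm.trans_le (prod_le_prod (fun _ _ => ha) fun i _ => h i)

theorem prod_le_mul_pow_of_forall_le (hf : ∀ i, 0 ≤ f i) {b : R} (h : ∀ i, f i ≤ b) (k : ι) :
    ∏ i, f i ≤ f k * b ^ (Fintype.card ι - 1) := by
  rw [← mul_prod_erase univ f (mem_univ k), ← card_univ, ← card_erase_of_mem (mem_univ k)]
  refine mul_le_mul_of_nonneg_left ?_ (hf k)
  exact (prod_le_prod (fun i _ => hf i) fun i _ => h i).trans_eq (prod_const b)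

end ProdBounds

theorem min_le_and_le_max_of_mul_eq_sq {R : Type*} [CommSemiring R] [LinearOrder R]
    [IsStrictOrderedRing R] {x y r : R} (hx : 0 ≤ x) (hy : 0 ≤ y) (hr : 0 ≤ r)
    (h : x * y = r ^ 2) : min x y ≤ r ∧ r ≤ max x y := by
  rw [← min_mul_max] at h
  have hmin : 0 ≤ min x y := le_min hx hy
  have hmax : 0 ≤ max x y := hmin.trans min_le_max
  constructor
  · refine (pow_le_pow_iff_left₀ hmin hr two_ne_zero).mp ?_
    rw [← h, sq]
    exact mul_le_mul_of_nonneg_left min_le_max hmin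
  · refine (pow_le_pow_iff_left₀ hr hmax two_ne_zero).mp ?_
    rw [← h, sq]
    exact mul_le_mul_of_nonneg_right min_le_max hmax

theorem Real.rpow_natCast_div_two_sq {x : ℝ} (hx : 0 ≤ x) (n : ℕ) :
    (x ^ ((n : ℝ) / 2)) ^ 2 = x ^ n := by
  rw [← Real.rpow_mul_natCast hx, Nat.cast_ofNat, div_mul_cancel₀ _ two_ne_zero,
    Real.rpow_natCast]

theorem dilatation_inequalities {m : ℕ} {a b P : ℝ} (ha : 0 < a) (hb : 0 < b)
    (hlow : b * a ^ m ≤ P) (hup : P ≤ a * b ^ m) :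
    (b / a ≤ min (P / a ^ (m + 1)) (b ^ (m + 1) / P) ∧
        min (P / a ^ (m + 1)) (b ^ (m + 1) / P) ≤ (b / a) ^ (((m + 1 : ℕ) : ℝ) / 2)) ∧
      ((b / a) ^ (((m + 1 : ℕ) : ℝ) / 2) ≤ max (P / a ^ (m + 1)) (b ^ (m + 1) / P) ∧
        max (P / a ^ (m + 1)) (b ^ (m + 1) / P) ≤ (b / a) ^ m) := by
  have hP : 0 < P := lt_of_lt_of_le (by positivity) hlow
  have hHI_lower : b / a ≤ P / a ^ (m + 1) := by
    rw [div_le_div_iff₀ ha (by positivity)]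
    calc b * a ^ (m + 1) = b * a ^ m * a := by ring
      _ ≤ P * a := by gcongr
  have hHO_lower : b / a ≤ b ^ (m + 1) / P := by
    rw [div_le_div_iff₀ ha hP]
    calc b * P ≤ b * (a * b ^ m) := by gcongr
      _ = b ^ (m + 1) * a := by ring
  have hHI_upper : P / a ^ (m + 1) ≤ (b / a) ^ m := by
    rw [div_pow, div_le_div_iff₀ (by positivity) (by positivity)]
    calc P * a ^ m ≤ a * b ^ m * a ^ m := by gcongr
      _ = b ^ m * a ^ (m + 1) := by ring
  have hHO_upper : b ^ (m + 1) / P ≤ (b / a) ^ m := by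
    rw [div_pow, div_le_div_iff₀ hP (by positivity)]
    calc b ^ (m + 1) * a ^ m = b * a ^ m * b ^ m := by ring
      _ ≤ P * b ^ m := by gcongr
      _ = b ^ m * P := by ring
  have hprod :
      P / a ^ (m + 1) * (b ^ (m + 1) / P) = ((b / a) ^ (((m + 1 : ℕ) : ℝ) / 2)) ^ 2 := by
    rw [Real.rpow_natCast_div_two_sq (by positivity), div_pow]
    field_simp
  have hmean :=
    min_le_and_le_max_of_mul_eq_sq (by positivity) (by positivity) (by positivity) hprod
  exact ⟨⟨le_min hHI_lower hHO_lower, hmean.1⟩, hmean.2, max_le hHI_upper hHO_upper⟩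

/-- Inequalities between the linear dilatations `H_I`, `H_O`, `H` of an invertible
real `n×n` matrix `A` with singular values `λ₁ ≤ ⋯ ≤ λₙ`. -/
theorem stmt13 (n : ℕ) (hn : 0 < n) (A : Matrix (Fin n) (Fin n) ℝ)
    (lam : Fin n → ℝ) (hpos : ∀ i, 0 < lam i) (hmono : Monotone lam)
    (hA : (A * A.transpose).IsHermitian)
    (heig : ∃ σ : Equiv.Perm (Fin n), ∀ i, hA.eigenvalues (σ i) = lam i ^ 2) :
    let l1 := lam ⟨0, hn⟩
    let ln := lam ⟨n - 1, Nat.sub_lt hn one_pos⟩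
    let HI := |A.det| / l1 ^ n
    let HO := ln ^ n / |A.det|
    let H := ln / l1
    (H ≤ min HI HO ∧ min HI HO ≤ H ^ ((n : ℝ) / 2)) ∧
    (H ^ ((n : ℝ) / 2) ≤ max HI HO ∧ max HI HO ≤ H ^ (n - 1)) := by
  obtain ⟨m, rfl⟩ : ∃ m, n = m + 1 := ⟨n - 1, by omega⟩
  obtain ⟨σ, hσ⟩ := heig
  intro l1 ln HI HO H
  have hdet := A.abs_det_eq_prod_of_eigenvalues_mul_transpose hA (fun i => (hpos i).le) σ hσ
  have hlow : ln * l1 ^ m ≤ ∏ i, lam i := by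
    have := mul_pow_le_prod_of_forall_le (a := l1) (hpos _).le (fun i => hmono (Fin.zero_le i))
      (Fin.last m)
    rwa [Fintype.card_fin, Nat.add_sub_cancel] at this
  have hup : ∏ i, lam i ≤ l1 * ln ^ m := by
    have := prod_le_mul_pow_of_forall_le (b := ln) (fun i => (hpos i).le)
      (fun i => hmono (Fin.le_last i)) 0
    rwa [Fintype.card_fin, Nat.add_sub_cancel] at this
  simp only [HI, HO, H, hdet, Nat.add_sub_cancel]
  exact dilatation_inequalities (hpos _) (hpos _) hlow hup
end

section
/- For the ellipse with polar parametrization r(t) = ab / √(b²cos²t + a²sin²t), 0 < a < b, the ratio r'(t)/r(t) satisfies 0 ≤ r'(t)/r(t) ≤ (b² − a²)/(2ab) for t ∈ [0, π/2], with equality in the upper bound if and only if tan t = b/a. -/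
/-- For the polar parametrization `r(t) = ab/√(b²cos²t + a²sin²t)` of the ellipse,
`0 ≤ r'(t)/r(t) ≤ (b²−a²)/(2ab)` on `[0, π/2]`, with equality in the upper bound
iff `tan t = b/a`. -/
theorem stmt14 (a b : ℝ) (ha : 0 < a) (hab : a < b) :
    let r : ℝ → ℝ :=
      fun t => a * b / Real.sqrt (b ^ 2 * Real.cos t ^ 2 + a ^ 2 * Real.sin t ^ 2)
    ∀ t ∈ Set.Icc (0 : ℝ) (Real.pi / 2),
      0 ≤ deriv r t / r t ∧ deriv r t / r t ≤ (b ^ 2 - a ^ 2) / (2 * a * b) ∧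
      (deriv r t / r t = (b ^ 2 - a ^ 2) / (2 * a * b) ↔ Real.tan t = b / a) := by
  intro r t ht
  obtain ⟨ht0, ht1⟩ := ht
  have hb : 0 < b := ha.trans hab
  set s := Real.sin t with hs
  set c := Real.cos t with hc
  have hsc : s ^ 2 + c ^ 2 = 1 := Real.sin_sq_add_cos_sq t
  have hs0 : 0 ≤ s := Real.sin_nonneg_of_nonneg_of_le_pi ht0 (ht1.trans (by linarith [Real.pi_pos]))
  have hc0 : 0 ≤ c := Real.cos_nonneg_of_mem_Icc ⟨by linarith [Real.pi_pos], ht1⟩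
  have hQ : 0 < b ^ 2 * c ^ 2 + a ^ 2 * s ^ 2 := by nlinarith [hsc, mul_nonneg (by nlinarith : (0:ℝ) ≤ b ^ 2 - a ^ 2) (sq_nonneg c), sq_nonneg a, mul_pos ha ha]
  set Q : ℝ := b ^ 2 * c ^ 2 + a ^ 2 * s ^ 2 with hQdef
  have hsqQ : 0 < Real.sqrt Q := Real.sqrt_pos.mpr hQ
  have hsq2 : Real.sqrt Q ^ 2 = Q := Real.sq_sqrt hQ.le
  have hQ' : HasDerivAt (fun t => b ^ 2 * Real.cos t ^ 2 + a ^ 2 * Real.sin t ^ 2)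
      (2 * s * c * (a ^ 2 - b ^ 2)) t := by
    have h1 : HasDerivAt (fun t => b ^ 2 * Real.cos t ^ 2 + a ^ 2 * Real.sin t ^ 2)
        (b ^ 2 * ((2 : ℕ) * Real.cos t ^ 1 * (-Real.sin t)) +
          a ^ 2 * ((2 : ℕ) * Real.sin t ^ 1 * Real.cos t)) t :=
      (((Real.hasDerivAt_cos t).pow 2).const_mul (b ^ 2)).add
        (((Real.hasDerivAt_sin t).pow 2).const_mul (a ^ 2))
    convert h1 using 1
    push_cast
    ring
  have hrd : HasDerivAt r
      ((0 * Real.sqrt Q - a * b * (2 * s * c * (a ^ 2 - b ^ 2) / (2 * Real.sqrt Q))) /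
        Real.sqrt Q ^ 2) t := by
    exact (hasDerivAt_const t (a * b)).div (hQ'.sqrt hQ.ne') hsqQ.ne'
  have hrt : r t = a * b / Real.sqrt Q := rfl
  have key : deriv r t / r t = (b ^ 2 - a ^ 2) * s * c / Q := by
    rw [hrd.deriv, hrt]
    rw [hsq2]
    rw [div_eq_div_iff (by positivity) hQ.ne']
    field_simp
    nlinarith [hsq2, hsqQ, sq_nonneg (Real.sqrt Q)]
  rw [key]
  have hba : 0 < b ^ 2 - a ^ 2 := by nlinarith
  refine ⟨by positivity, ?_, ?_⟩
  · rw [div_le_div_iff₀ hQ (by positivity), hQdef]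
    nlinarith [mul_nonneg hba.le (sq_nonneg (b * c - a * s))]
  · constructor
    · intro h
      rw [div_eq_div_iff hQ.ne' (by positivity), hQdef] at h
      have h4 : (b ^ 2 - a ^ 2) * (b * c - a * s) ^ 2 = 0 := by linear_combination -h
      have h2 : (b * c - a * s) ^ 2 = 0 := by
        rcases mul_eq_zero.mp h4 with h5 | h5
        · exact absurd h5 hba.ne'
        · exact h5
      have hbc : b * c = a * s := by
        have := pow_eq_zero_iff two_ne_zero |>.mp h2
        linarith
      have hcne : c ≠ 0 := by
        intro hc0'
        have : s = 0 := by
          have := hbc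
          rw [hc0'] at this
          nlinarith
        rw [hc0', this] at hsc; norm_num at hsc
      rw [Real.tan_eq_sin_div_cos, ← hs, ← hc]
      rw [div_eq_div_iff hcne ha.ne']
      linarith
    · intro h
      rw [Real.tan_eq_sin_div_cos, ← hs, ← hc] at h
      have hcne : c ≠ 0 := by
        intro hc0'
        rw [hc0'] at h
        simp at h
        have : 0 < b / a := by positivity
        rw [← h] at this; exact lt_irrefl 0 this
      have has : a * s = b * c := by
        field_simp at h
        linarith
      rw [div_eq_div_iff hQ.ne' (by positivity), hQdef]
      linear_combination ((b ^ 2 - a ^ 2) * (b * c - a * s)) * has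
end
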